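/- Let n ≥ 1 and k ≥ 0 be integers. Define the sequence of pairs (p_j, q_j) = (4n + 2j, (n + 2)·(4n + 2j) − 1) for 0 ≤ j ≤ k. Then for every j with 1 ≤ j ≤ k, applying the pinch-move parameter map (p, q) ↦ (|p − 2t|, |q − 2h|), where t is the unique integer in {0, …, p−1} with q·t ≡ −1 (mod p) and h is the unique integer in {0, …, q−1} with p·h ≡ 1 (mod q), sends (p_j, q_j) to (p_{j−1}, q_{j−1}). In particular, k successive applications of this map send (4n + 2k, (n + 2)·(4n + 2k) − 1) to (4n, 4n·(n + 2) − 1) = (4n, (2n+1)² + 4n − 2). -/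
import Mathlib


open Classical

/-- The pinch-move parameter map `(p, q) ↦ (|p - 2t|, |q - 2h|)`, where `t` is the
unique integer in `{0, …, p-1}` with `q*t ≡ -1 (mod p)` and `h` is the unique
integer in `{0, …, q-1}` with `p*h ≡ 1 (mod q)` (identity if such unique `t`, `h`
fail to exist). -/

noncomputable def pinchMap (pq : ℤ × ℤ) : ℤ × ℤ :=
  if H : (∃! t : ℤ, 0 ≤ t ∧ t ≤ pq.1 - 1 ∧ pq.1 ∣ pq.2 * t + 1) ∧
      (∃! h : ℤ, 0 ≤ h ∧ h ≤ pq.2 - 1 ∧ pq.2 ∣ pq.1 * h - 1) then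
    (|pq.1 - 2 * H.1.choose|, |pq.2 - 2 * H.2.choose|)
  else pq

lemma pinch_step (n j : ℤ) (hn : 1 ≤ n) (hj : 1 ≤ j) :
    pinchMap (4 * n + 2 * j, (n + 2) * (4 * n + 2 * j) - 1) =
      (4 * n + 2 * (j - 1), (n + 2) * (4 * n + 2 * (j - 1)) - 1) := by
  set p : ℤ := 4 * n + 2 * j with hp
  set q : ℤ := (n + 2) * p - 1 with hq
  have hp6 : (6:ℤ) ≤ p := by simp [hp]; linarith
  have hq17 : (17:ℤ) ≤ q := by nlinarith
  have hkey : (6:ℤ) * (n + 2) ≤ q + 1 := by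
    have := mul_le_mul_of_nonneg_left hp6 (by linarith : (0:ℤ) ≤ n + 2)
    linarith
  have Ht : ∃! t : ℤ, 0 ≤ t ∧ t ≤ p - 1 ∧ p ∣ q * t + 1 := by
    refine ⟨1, ⟨by norm_num, by linarith, ⟨n + 2, by ring⟩⟩, ?_⟩
    rintro t ⟨ht0, ht1, c, hc⟩
    have hd : p ∣ t - 1 := ⟨(n + 2) * t - c, by nlinarith⟩
    have := Int.eq_zero_of_abs_lt_dvd hd (by rw [abs_lt]; constructor <;> linarith)
    linarith
  have Hh : ∃! h : ℤ, 0 ≤ h ∧ h ≤ q - 1 ∧ q ∣ p * h - 1 := by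
    refine ⟨n + 2, ⟨by linarith, by linarith, ⟨1, by ring⟩⟩, ?_⟩
    rintro h ⟨hh0, hh1, c, hc⟩
    have hd : q ∣ h - (n + 2) := ⟨(n + 2) * c - h, by nlinarith⟩
    have := Int.eq_zero_of_abs_lt_dvd hd (by rw [abs_lt]; constructor <;> linarith)
    linarith
  have H : (∃! t : ℤ, 0 ≤ t ∧ t ≤ (p, q).1 - 1 ∧ (p, q).1 ∣ (p, q).2 * t + 1) ∧
      (∃! h : ℤ, 0 ≤ h ∧ h ≤ (p, q).2 - 1 ∧ (p, q).2 ∣ (p, q).1 * h - 1) := ⟨Ht, Hh⟩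
  have heq : ((4 * n + 2 * j : ℤ), (n + 2) * (4 * n + 2 * j) - 1) = (p, q) := by
    simp [hp, hq]
  rw [heq, pinchMap, dif_pos H]
  have ht1 : H.1.choose = 1 := Ht.unique H.1.choose_spec.1 ⟨by norm_num, by linarith, ⟨n + 2, by ring⟩⟩
  have hh1 : H.2.choose = n + 2 := Hh.unique H.2.choose_spec.1 ⟨by linarith, by linarith, ⟨1, by ring⟩⟩
  rw [ht1, hh1]
  have : |p - 2 * 1| = p - 2 := abs_of_nonneg (by linarith)
  have h2 : |q - 2 * (n + 2)| = q - 2 * (n + 2) := abs_of_nonneg (by linarith)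
  rw [this, h2]
  simp only [hp, hq, Prod.mk.injEq]
  constructor <;> ring

/-- For `1 ≤ j ≤ k`, the pinch-move parameter map sends
`(4n+2j, (n+2)(4n+2j) - 1)` to `(4n+2(j-1), (n+2)(4n+2(j-1)) - 1)`; in particular
`k` successive applications send `(4n+2k, (n+2)(4n+2k) - 1)` to
`(4n, 4n(n+2) - 1) = (4n, (2n+1)² + 4n - 2)`. -/
theorem pinch_iterates_family_n_add_two (n : ℤ) (k : ℕ) (hn : 1 ≤ n) :
    (∀ j : ℕ, 1 ≤ j → j ≤ k →
      pinchMap (4 * n + 2 * (j : ℤ), (n + 2) * (4 * n + 2 * (j : ℤ)) - 1) =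
        (4 * n + 2 * ((j : ℤ) - 1), (n + 2) * (4 * n + 2 * ((j : ℤ) - 1)) - 1)) ∧
    pinchMap^[k] (4 * n + 2 * (k : ℤ), (n + 2) * (4 * n + 2 * (k : ℤ)) - 1) =
      (4 * n, 4 * n * (n + 2) - 1) ∧
    4 * n * (n + 2) - 1 = (2 * n + 1) ^ 2 + 4 * n - 2 := by

  refine ⟨fun j hj _ => pinch_step n j hn (by exact_mod_cast hj), ?_, by ring⟩
  induction k with
  | zero => simp; ring
  | succ k ih =>
    rw [Function.iterate_succ_apply]
    have := pinch_step n (k + 1 : ℕ) hn (by exact_mod_cast Nat.succ_le_succ (Nat.zero_le k))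
    push_cast at this ⊢
    rw [show ((k:ℤ) + 1 - 1) = (k:ℤ) by ring] at this
    rw [this]
    exact ih
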